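/- arXiv:1907.03158 — 8 statements merged into one kernel-verified Lean document; each statement's English description precedes it below -/
import Mathlib

section
/- Let D be a minimum dominating set of a graph G and u ∈ D with pn(u, D) = {u}. Then for each v ∈ N(u), the set D_v = (D \ {u}) ∪ {v} is also a minimum dominating set of G. -/
open SimpleGraph Finset

/-- The closed neighbourhood of a vertex. -/
def closedNbhd {V : Type} (G : SimpleGraph V) (x : V) : Set V :=
  {y | y = x ∨ G.Adj x y}

/-- `D` is a dominating set of `G`. -/
def isDomSet {V : Type} [Fintype V] [DecidableEq V] (G : SimpleGraph V) (D : Finset V) : Prop :=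
  ∀ v : V, ∃ d ∈ D, v ∈ closedNbhd G d

/-- `D` is a minimum dominating set (γ-set) of `G`. -/
def isMinDomSet {V : Type} [Fintype V] [DecidableEq V] (G : SimpleGraph V) (D : Finset V) : Prop :=
  isDomSet G D ∧ ∀ D' : Finset V, isDomSet G D' → D.card ≤ D'.card

/-- The set of `D`-private neighbours of `x`: vertices in `N[x]` not in the closed
neighbourhood of any other vertex of `D`. -/
def privN {V : Type} [Fintype V] [DecidableEq V] (G : SimpleGraph V) (D : Finset V) (x : V) :
    Set V :=
  {y | y ∈ closedNbhd G x ∧ ∀ z ∈ D, z ≠ x → y ∉ closedNbhd G z}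

/-- The γ-graph of `G`: vertices are the γ-sets of `G`, two γ-sets adjacent iff they differ
by a swap of two adjacent vertices. -/
def gammaGraph {V : Type} [Fintype V] [DecidableEq V] (G : SimpleGraph V) :
    SimpleGraph {D : Finset V // isMinDomSet G D} where
  Adj D₁ D₂ := D₁ ≠ D₂ ∧ ∃ u v : V, G.Adj u v ∧
    (D₂.1 = (D₁.1 \ {u}) ∪ {v} ∨ D₁.1 = (D₂.1 \ {u}) ∪ {v})
  symm := by
    constructor
    rintro D₁ D₂ ⟨hne, u, v, huv, h | h⟩
    · exact ⟨hne.symm, u, v, huv, Or.inr h⟩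
    · exact ⟨hne.symm, u, v, huv, Or.inl h⟩
  loopless := by constructor; rintro D ⟨hne, -⟩; exact hne rfl

/-- A vertex dominated by no vertex of `D` other than `u` is a private neighbour of `u`. -/
theorem isDomSet_sdiff_union_of_privN_subset {V : Type} [Fintype V] [DecidableEq V]
    {G : SimpleGraph V} {D : Finset V} {u v : V} (hD : isDomSet G D)
    (hpn : privN G D u ⊆ closedNbhd G v) : isDomSet G ((D \ {u}) ∪ {v}) := by
  have mem_of_ne {z : V} (hz : z ∈ D) (hzu : z ≠ u) : z ∈ (D \ {u}) ∪ {v} :=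
    mem_union_left _ (mem_sdiff.mpr ⟨hz, by simpa using hzu⟩)
  intro w
  obtain ⟨d, hd, hwd⟩ := hD w
  by_cases hdu : d = u
  · subst hdu
    by_cases hother : ∃ z ∈ D, z ≠ d ∧ w ∈ closedNbhd G z
    · obtain ⟨z, hz, hzd, hwz⟩ := hother
      exact ⟨z, mem_of_ne hz hzd, hwz⟩
    · push Not at hother
      exact ⟨v, mem_union_right _ (mem_singleton_self v), hpn ⟨hwd, hother⟩⟩
  · exact ⟨d, mem_of_ne hd hdu, hwd⟩

theorem card_sdiff_singleton_union_singleton_le {V : Type} [DecidableEq V] {D : Finset V}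
    {u : V} (hu : u ∈ D) (v : V) : ((D \ {u}) ∪ {v}).card ≤ D.card := by
  rw [sdiff_singleton_eq_erase, union_singleton, ← card_erase_add_one hu]
  exact card_insert_le v (D.erase u)

theorem isMinDomSet_of_isDomSet_of_card_le {V : Type} [Fintype V] [DecidableEq V]
    {G : SimpleGraph V} {D D' : Finset V} (hD : isMinDomSet G D) (hD' : isDomSet G D')
    (hcard : D'.card ≤ D.card) : isMinDomSet G D' :=
  ⟨hD', fun D'' hD'' => hcard.trans (hD.2 D'' hD'')⟩

theorem stmt1 {V : Type} [Fintype V] [DecidableEq V] (G : SimpleGraph V)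
    (D : Finset V) (u v : V)
    (hD : isMinDomSet G D) (hu : u ∈ D) (hpn : privN G D u = {u})
    (hv : v ∈ G.neighborSet u) :
    isMinDomSet G ((D \ {u}) ∪ {v}) := by
  have hpn_subset : privN G D u ⊆ closedNbhd G v := by
    rw [hpn, Set.singleton_subset_iff]
    exact Or.inr (G.adj_symm hv)
  exact isMinDomSet_of_isDomSet_of_card_le hD
    (isDomSet_sdiff_union_of_privN_subset hD.1 hpn_subset)
    (card_sdiff_singleton_union_singleton_le hu v)
end

section
/- Let D and F be minimum dominating sets of a tree T with F = (D \ {y}) ∪ {z} for adjacent vertices y, z. Then for every x ∈ D ∩ F, |pn(x, D) \ pn(x, F)| ≤ 1 and |pn(x, F) \ pn(x, D)| ≤ 1. -/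
open SimpleGraph Finset

/-!
Since `D` and `F` are both minimum, either `F = D` or `y ∈ D` and `z ∉ D`. In the latter case,
swapping `y` for its neighbour `z` changes the private neighbourhood of another vertex
`x ∈ D ∩ F` only inside `N[x] ∩ N[z]` (what is lost) and `N[x] ∩ N[y]` (what is gained), minus
`z`, resp. `y`, which are dominated by the other swapped vertex. In a tree, the closed
neighbourhoods of two distinct vertices `a, b` share at most one vertex other than `b`: two such
vertices would give two different paths from `a` to `b`.
-/

section Acyclic

variable {V : Type} [DecidableEq V] {G : SimpleGraph V}

lemma exists_path_support_of_mem_closedNbhd {a b w : V} (hab : a ≠ b)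
    (hw : w ∈ (closedNbhd G a ∩ closedNbhd G b) \ {b}) :
    ∃ p : G.Path a b, p.1.support = if w = a then [a, b] else [a, w, b] := by
  obtain ⟨⟨rfl | haw, rfl | hbw⟩, hwb⟩ := hw
  · exact absurd rfl hab
  · exact ⟨.singleton hbw.symm, by simp⟩
  · exact absurd rfl hwb
  · rw [Set.mem_singleton_iff] at hwb
    refine ⟨⟨.cons haw (.cons hbw.symm .nil), ?_⟩, by simp [haw.ne']⟩
    simp [Walk.isPath_def, hab, haw.ne, hwb]

lemma subsingleton_closedNbhd_inter_diff (hG : G.IsAcyclic) {a b : V} (hab : a ≠ b) :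
    ((closedNbhd G a ∩ closedNbhd G b) \ {b}).Subsingleton := by
  intro w₁ hw₁ w₂ hw₂
  obtain ⟨p₁, hp₁⟩ := exists_path_support_of_mem_closedNbhd hab hw₁
  obtain ⟨p₂, hp₂⟩ := exists_path_support_of_mem_closedNbhd hab hw₂
  have hsupp := congrArg (fun p : G.Path a b => p.1.support)
    ((hG.subsingleton_path a b).elim p₁ p₂)
  simp only [hp₁, hp₂] at hsupp
  split_ifs at hsupp <;> simp_all

end Acyclic

lemma eq_or_mem_and_notMem_of_card_swap_eq {V : Type} [DecidableEq V] {D F : Finset V} {y z : V}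
    (hFD : F = (D \ {y}) ∪ {z}) (hcard : F.card = D.card) : F = D ∨ (y ∈ D ∧ z ∉ D) := by
  rw [sdiff_singleton_eq_erase, union_comm, ← insert_eq] at hFD
  subst hFD
  by_cases hyD : y ∈ D <;> by_cases hzD : z ∈ D
  · by_cases hzy : z = y
    · subst hzy
      exact Or.inl (insert_erase hyD)
    · rw [insert_eq_of_mem (mem_erase.2 ⟨hzy, hzD⟩), card_erase_of_mem hyD] at hcard
      have := card_pos.2 ⟨y, hyD⟩
      omega
  · exact Or.inr ⟨hyD, hzD⟩
  · left
    rw [erase_eq_of_notMem hyD, insert_eq_of_mem hzD]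
  · rw [erase_eq_of_notMem hyD, card_insert_of_notMem hzD] at hcard
    omega

section Domination

variable {V : Type} [Fintype V] [DecidableEq V] {G : SimpleGraph V}

lemma isMinDomSet.card_eq {D F : Finset V} (hD : isMinDomSet G D) (hF : isMinDomSet G F) :
    F.card = D.card :=
  le_antisymm (hF.2 D hD.1) (hD.2 F hF.1)

lemma privN_sdiff_privN_subset {D F : Finset V} {x y z : V} (hyD : y ∈ D) (hyx : y ≠ x)
    (hyz : G.Adj y z) (hFD : F \ D ⊆ {z}) :
    privN G D x \ privN G F x ⊆ (closedNbhd G x ∩ closedNbhd G z) \ {z} := by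
  rintro w ⟨⟨hwx, hwD⟩, hwF⟩
  obtain ⟨f, hfF, hfx, hwf⟩ : ∃ f ∈ F, f ≠ x ∧ w ∈ closedNbhd G f := by
    by_contra! h
    exact hwF ⟨hwx, h⟩
  have hfD : f ∉ D := fun hfD => hwD f hfD hfx hwf
  obtain rfl : f = z := mem_singleton.1 (hFD (mem_sdiff.2 ⟨hfF, hfD⟩))
  refine ⟨⟨hwx, hwf⟩, ?_⟩
  rintro rfl
  exact hwD y hyD hyx (Or.inr hyz)

end Domination

theorem stmt4 {V : Type} [Fintype V] [DecidableEq V] (T : SimpleGraph V) (hT : T.IsTree)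
    (D F : Finset V) (y z : V)
    (hD : isMinDomSet T D) (hF : isMinDomSet T F)
    (hyz : T.Adj y z) (hFD : F = (D \ {y}) ∪ {z})
    (x : V) (hxD : x ∈ D) (hxF : x ∈ F) :
    (privN T D x \ privN T F x).ncard ≤ 1 ∧ (privN T F x \ privN T D x).ncard ≤ 1 := by
  obtain rfl | ⟨hyD, hzD⟩ := eq_or_mem_and_notMem_of_card_swap_eq hFD (hD.card_eq hF)
  · simp
  have hzx : z ≠ x := fun h => hzD (h ▸ hxD)
  have hyx : y ≠ x := by
    rintro rfl
    simp [hFD, hyz.ne] at hxF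
  have hzF : z ∈ F := by simp [hFD]
  have hFD_sub : F \ D ⊆ {z} := by
    intro v
    simp only [hFD, mem_sdiff, mem_union, mem_singleton]
    tauto
  have hDF_sub : D \ F ⊆ {y} := by
    intro v
    simp only [hFD, mem_sdiff, mem_union, mem_singleton]
    tauto
  simp only [Set.ncard_le_one_iff_subsingleton]
  exact ⟨(subsingleton_closedNbhd_inter_diff hT.isAcyclic hzx.symm).anti
      (privN_sdiff_privN_subset hyD hyx hyz hFD_sub),
    (subsingleton_closedNbhd_inter_diff hT.isAcyclic hyx.symm).anti
      (privN_sdiff_privN_subset hzF hzx hyz.symm hDF_sub)⟩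
end

section
/- For a minimum dominating set D of a tree T and a vertex z ∉ D, there is at most one vertex v ∈ D such that (D \ {v}) ∪ {z} is also a minimum dominating set of T. -/
/-!
Let `v₁ ≠ v₂` both admit the swap. A `D`-private neighbour `pᵢ` of `vᵢ` must be dominated by `z`
after `vᵢ` is removed, so `vᵢ – pᵢ – z` is a walk of length at most two; and a private neighbour
`y` of `v₁` with respect to `(D \ {v₂}) ∪ {z}` lies outside `N[z]`, hence must be dominated by
`v₂` in `D`. The walk `v₁ – y – v₂` avoids `z`, so together with `v₁ – p₁ – z – p₂ – v₂` it closes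
a cycle through `z`, which a tree does not have.
-/

open SimpleGraph Finset

variable {V : Type} {G : SimpleGraph V}

section ClosedNbhd

lemma mem_closedNbhd_self (x : V) : x ∈ closedNbhd G x := Or.inl rfl

lemma mem_closedNbhd_comm {x y : V} : y ∈ closedNbhd G x ↔ x ∈ closedNbhd G y :=
  or_congr eq_comm (G.adj_comm x y)

lemma exists_walk_not_mem_support_of_mem_closedNbhd {x y z : V} (h : y ∈ closedNbhd G x)
    (hx : x ≠ z) (hy : y ≠ z) : ∃ w : G.Walk x y, z ∉ w.support := by
  rcases h with rfl | hxy
  · exact ⟨.nil, by simpa using hx.symm⟩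
  · exact ⟨hxy.toWalk, by simp [hx.symm, hy.symm]⟩

lemma exists_adj_of_mem_closedNbhd_inter {v p z : V} (hvz : v ≠ z)
    (hp : p ∈ closedNbhd G v ∩ closedNbhd G z) :
    ∃ a, (a = v ∨ a = p) ∧ a ∈ closedNbhd G v ∧ G.Adj a z := by
  obtain ⟨rfl | hvp, rfl | hzp⟩ := hp
  · exact absurd rfl hvz
  · exact ⟨p, .inl rfl, mem_closedNbhd_self p, hzp.symm⟩
  · exact ⟨v, .inl rfl, mem_closedNbhd_self v, hvp⟩
  · exact ⟨p, .inr rfl, .inr hvp, hzp.symm⟩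

end ClosedNbhd

namespace SimpleGraph.IsAcyclic

lemma mem_support_of_adj_of_adj (hG : G.IsAcyclic) {a b z : V} (haz : G.Adj a z)
    (hzb : G.Adj z b) (hab : a ≠ b) (w : G.Walk a b) : z ∈ w.support := by
  classical
  have hpath : (Walk.cons haz (Walk.cons hzb .nil)).IsPath := by simp [hab, haz.ne, hzb.ne]
  have hunique := (hG.subsingleton_path a b).elim ⟨_, hpath⟩ w.toPath
  apply w.support_bypass_subset_support
  rw [← show _ = w.bypass from congrArg Subtype.val hunique]
  simp

theorem not_closedNbhd_hexagon (hG : G.IsAcyclic) {z v₁ v₂ p₁ p₂ y : V}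
    (hv₁ : v₁ ≠ z) (hv₂ : v₂ ≠ z) (hv : v₁ ≠ v₂)
    (hp₁ : p₁ ∈ closedNbhd G v₁ ∩ closedNbhd G z) (hp₁v₂ : p₁ ∉ closedNbhd G v₂)
    (hp₂ : p₂ ∈ closedNbhd G v₂ ∩ closedNbhd G z) (hp₂v₁ : p₂ ∉ closedNbhd G v₁)
    (hy : y ∈ closedNbhd G v₁ ∩ closedNbhd G v₂) (hyz : y ∉ closedNbhd G z) : False := by
  obtain ⟨a₁, ha₁, ha₁v₁, ha₁z⟩ := exists_adj_of_mem_closedNbhd_inter hv₁ hp₁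
  obtain ⟨a₂, ha₂, ha₂v₂, ha₂z⟩ := exists_adj_of_mem_closedNbhd_inter hv₂ hp₂
  have ha : a₁ ≠ a₂ := by
    rcases ha₁ with rfl | rfl <;> rcases ha₂ with rfl | rfl <;> rintro rfl
    · exact hv rfl
    · exact hp₂v₁ (mem_closedNbhd_self _)
    · exact hp₁v₂ (mem_closedNbhd_self _)
    · exact hp₁v₂ hp₂.1
  have hyz' : y ≠ z := by rintro rfl; exact hyz (mem_closedNbhd_self _)
  obtain ⟨w₁, hw₁⟩ :=
    exists_walk_not_mem_support_of_mem_closedNbhd (mem_closedNbhd_comm.1 ha₁v₁) ha₁z.ne hv₁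
  obtain ⟨w₂, hw₂⟩ := exists_walk_not_mem_support_of_mem_closedNbhd hy.1 hv₁ hyz'
  obtain ⟨w₃, hw₃⟩ :=
    exists_walk_not_mem_support_of_mem_closedNbhd (mem_closedNbhd_comm.1 hy.2) hyz' hv₂
  obtain ⟨w₄, hw₄⟩ := exists_walk_not_mem_support_of_mem_closedNbhd ha₂v₂ hv₂ ha₂z.ne
  have hz := hG.mem_support_of_adj_of_adj ha₁z ha₂z.symm ha
    (w₁.append (w₂.append (w₃.append w₄)))
  simp [Walk.mem_support_append_iff, hw₁, hw₂, hw₃, hw₄] at hz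

end SimpleGraph.IsAcyclic

section Domination

variable [Fintype V] [DecidableEq V]

lemma isMinDomSet.exists_mem_privN {D : Finset V} (hD : isMinDomSet G D) {v : V} (hv : v ∈ D) :
    ∃ p, p ∈ privN G D v := by
  by_contra! h
  have hdom : isDomSet G (D.erase v) := by
    intro w
    obtain ⟨d, hd, hw⟩ := hD.1 w
    by_cases hdv : d = v
    · subst hdv
      obtain ⟨d', hd', hd'v, hw'⟩ : ∃ d' ∈ D, d' ≠ d ∧ w ∈ closedNbhd G d' := by
        by_contra! hpriv
        exact h w ⟨hw, hpriv⟩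
      exact ⟨d', mem_erase.2 ⟨hd'v, hd'⟩, hw'⟩
    · exact ⟨d, mem_erase.2 ⟨hdv, hd⟩, hw⟩
  exact (hD.2 _ hdom).not_gt (card_erase_lt_of_mem hv)

lemma isDomSet.mem_closedNbhd_of_mem_privN {D : Finset V} {v z p : V}
    (hdom : isDomSet G ((D \ {v}) ∪ {z})) (hp : p ∈ privN G D v) : p ∈ closedNbhd G z := by
  obtain ⟨d, hd, hpd⟩ := hdom p
  rcases mem_union.1 hd with hd | hd
  · obtain ⟨hdD, hdv⟩ := mem_sdiff.1 hd
    exact absurd hpd (hp.2 d hdD (by simpa using hdv))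
  · rwa [mem_singleton.1 hd] at hpd

lemma mem_privN_of_subset_insert {D D' : Finset V} {v w y : V} (hDD' : D ⊆ insert w D')
    (hy : y ∈ privN G D' v) (hyw : y ∉ closedNbhd G w) : y ∈ privN G D v := by
  refine ⟨hy.1, fun d hd hdv => ?_⟩
  rcases mem_insert.1 (hDD' hd) with rfl | hd'
  · exact hyw
  · exact hy.2 d hd' hdv

end Domination

theorem stmt5 {V : Type} [Fintype V] [DecidableEq V] (T : SimpleGraph V) (hT : T.IsTree)
    (D : Finset V) (hD : isMinDomSet T D) (z : V) (hz : z ∉ D) :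
    ∀ v₁ ∈ D, ∀ v₂ ∈ D,
      isMinDomSet T ((D \ {v₁}) ∪ {z}) → isMinDomSet T ((D \ {v₂}) ∪ {z}) → v₁ = v₂ := by
  intro v₁ hv₁ v₂ hv₂ hD₁ hD₂
  by_contra hne
  have hv₁z : v₁ ≠ z := by rintro rfl; exact hz hv₁
  have hv₂z : v₂ ≠ z := by rintro rfl; exact hz hv₂
  obtain ⟨p₁, hp₁⟩ := hD.exists_mem_privN hv₁
  obtain ⟨p₂, hp₂⟩ := hD.exists_mem_privN hv₂
  obtain ⟨y, hy⟩ := hD₂.exists_mem_privN (v := v₁) (by simp [hv₁, hne])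
  have hyz : y ∉ closedNbhd T z := hy.2 z (by simp) hv₁z.symm
  have hyv₂ : y ∈ closedNbhd T v₂ := by
    by_contra hyv₂
    have hDsub : D ⊆ insert v₂ ((D \ {v₂}) ∪ {z}) := fun d hd => by
      by_cases hd₂ : d = v₂ <;> simp [hd, hd₂]
    exact hyz (hD₁.1.mem_closedNbhd_of_mem_privN (mem_privN_of_subset_insert hDsub hy hyv₂))
  exact hT.isAcyclic.not_closedNbhd_hexagon hv₁z hv₂z hne
    ⟨hp₁.1, hD₁.1.mem_closedNbhd_of_mem_privN hp₁⟩ (hp₁.2 v₂ hv₂ (Ne.symm hne))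
    ⟨hp₂.1, hD₂.1.mem_closedNbhd_of_mem_privN hp₂⟩ (hp₂.2 v₁ hv₁ hne)
    ⟨hy.1, hyv₂⟩ hyz
end

section
/- Every tree T rooted at a vertex c has a unique highest minimum dominating set, i.e., there is a unique γ-set D of T minimizing ht_T(D) = Σ_{x∈D} d(x, c). -/
open SimpleGraph Finset

/-!
A γ-set `D` of minimal height exists by finiteness. If `v ∈ D` is not the root, swapping `v`
for its parent would give a smaller dominating set or a γ-set of smaller height, so the
swapped set does not dominate:
`v` has a private neighbour `y`, necessarily a child of `v`. A dominating set `E` avoiding `v`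
must dominate `y` by a vertex outside `D` that lies strictly deeper than `v`. So if `D` and `E`
are two different γ-sets of minimal height, no vertex of `D ∆ E` can be deepest in `D ∆ E`
(for the root this uses `|D \ E| = |E \ D|`).
-/

namespace SimpleGraph

variable {V : Type*} {T : SimpleGraph V} {c u : V}

lemma Reachable.exists_adj_dist_add_one_eq (h : T.Reachable u c) (hu : u ≠ c) :
    ∃ p, T.Adj u p ∧ T.dist p c + 1 = T.dist u c := by
  obtain ⟨w, hw⟩ := h.exists_walk_length_eq_dist
  cases w with
  | nil => exact absurd rfl hu
  | @cons _ p _ hadj q =>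
    refine ⟨p, hadj, le_antisymm ?_ ?_⟩
    · have := dist_le q
      rw [Walk.length_cons] at hw
      omega
    · have := hadj.reachable.dist_triangle_left c
      rw [dist_eq_one_iff_adj.mpr hadj] at this
      omega

lemma IsTree.eq_of_adj_of_dist_add_one_eq (hT : T.IsTree) {p p' : V}
    (hp : T.Adj u p) (hp' : T.Adj u p')
    (hpd : T.dist p c + 1 = T.dist u c) (hpd' : T.dist p' c + 1 = T.dist u c) : p = p' := by
  obtain ⟨q, hq, hql⟩ := hT.connected.exists_path_of_dist c u
  -- Both are the penultimate vertex of the path from `c` to `u`: otherwise the path from `c`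
  -- to them would run through `u`, which is farther away.
  have eq_penultimate : ∀ P, T.Adj u P → T.dist P c + 1 = T.dist u c → P = q.penultimate := by
    intro P hP hPd
    refine hT.isAcyclic.eq_penultimate_of_adj_end hq hP ?_
    by_contra hPq
    classical
    obtain ⟨r, hr, hrl⟩ := hT.connected.exists_path_of_dist c P
    have hur := hT.isAcyclic.mem_support_of_ne_mem_support_of_adj_of_isPath hr hq hP.symm hPq
    have : T.dist u c ≤ T.dist P c := by
      rw [dist_comm, dist_comm (u := P), ← hrl]
      exact (dist_le (r.takeUntil u hur)).trans (r.length_takeUntil_le_length hur)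
    omega
  rw [eq_penultimate p hp hpd, eq_penultimate p' hp' hpd']

lemma IsTree.dist_eq_add_one_of_adj_of_ne (hT : T.IsTree) {p y : V}
    (hy : T.Adj u y) (hp : T.Adj u p) (hpd : T.dist p c + 1 = T.dist u c) (hyp : y ≠ p) :
    T.dist y c = T.dist u c + 1 := by
  rw [dist_comm (u := y), dist_comm (u := u)]
  refine (hT.dist_eq_dist_add_one_of_adj c hy).resolve_left fun hyd => hyp ?_
  exact hT.eq_of_adj_of_dist_add_one_eq hy hp (by rw [dist_comm, dist_comm (u := u), hyd]) hpd

end SimpleGraph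

-- "Highest" as in the paper: closest to the root, i.e. of minimal height `∑ x ∈ D, d(x, c)`.
def IsHighestMinDomSet {V : Type} [Fintype V] [DecidableEq V] (G : SimpleGraph V) (c : V)
    (D : Finset V) : Prop :=
  isMinDomSet G D ∧ ∀ F : Finset V, isMinDomSet G F → ∑ x ∈ D, G.dist x c ≤ ∑ x ∈ F, G.dist x c

section Domination

variable {V : Type} [Fintype V] [DecidableEq V] {G : SimpleGraph V} {c v p : V} {D E : Finset V}

lemma exists_isHighestMinDomSet (G : SimpleGraph V) (c : V) : ∃ D, IsHighestMinDomSet G c D := by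
  obtain ⟨D₀, hD₀, hD₀min⟩ := Set.exists_min_image {D | isDomSet G D} card (Set.toFinite _)
    ⟨univ, fun v => ⟨v, mem_univ v, Or.inl rfl⟩⟩
  obtain ⟨D, hD, hDmin⟩ := Set.exists_min_image {D | isMinDomSet G D}
    (fun D => ∑ x ∈ D, G.dist x c) (Set.toFinite _) ⟨D₀, hD₀, hD₀min⟩
  exact ⟨D, hD, hDmin⟩

lemma IsHighestMinDomSet.not_isDomSet_insert_erase (hD : IsHighestMinDomSet G c D) (hv : v ∈ D)
    (hp : G.dist p c < G.dist v c) : ¬ isDomSet G (insert p (D.erase v)) := by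
  intro hdom
  have hcard : (insert p (D.erase v)).card ≤ D.card := by
    grw [card_insert_le, card_erase_add_one hv]
  have hmin : isMinDomSet G (insert p (D.erase v)) :=
    ⟨hdom, fun F hF => hcard.trans (hD.1.2 F hF)⟩
  have hpD : p ∉ D.erase v := by
    intro hpD
    have := hD.1.2 _ hdom
    rw [insert_eq_of_mem hpD, card_erase_of_mem hv] at this
    have := card_pos.mpr ⟨v, hv⟩
    omega
  have := hD.2 _ hmin
  rw [sum_insert hpD, ← sum_erase_add D _ hv] at this
  omega

lemma exists_mem_privN_of_not_isDomSet_insert_erase (hD : isDomSet G D)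
    (hD' : ¬ isDomSet G (insert p (D.erase v))) : ∃ y ∈ privN G D v, y ∉ closedNbhd G p := by
  simp only [isDomSet, not_forall, not_exists, not_and] at hD'
  obtain ⟨y, hy⟩ := hD'
  have hpriv : ∀ z ∈ D, z ≠ v → y ∉ closedNbhd G z := fun z hz hzv =>
    hy z (mem_insert_of_mem (mem_erase.mpr ⟨hzv, hz⟩))
  obtain ⟨d, hd, hyd⟩ := hD y
  obtain rfl : d = v := by_contra fun hdv => hpriv d hd hdv hyd
  exact ⟨y, ⟨hyd, hpriv⟩, hy p (mem_insert_self _ _)⟩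

variable {T : SimpleGraph V}

lemma IsHighestMinDomSet.exists_mem_privN_dist_eq_add_one (hT : T.IsTree)
    (hD : IsHighestMinDomSet T c D) (hv : v ∈ D) (hvc : v ≠ c) :
    ∃ y ∈ privN T D v, T.dist y c = T.dist v c + 1 := by
  obtain ⟨p, hvp, hpd⟩ := (hT.connected v c).exists_adj_dist_add_one_eq hvc
  obtain ⟨y, hy, hyp⟩ := exists_mem_privN_of_not_isDomSet_insert_erase hD.1.1
    (hD.not_isDomSet_insert_erase (p := p) hv (by omega))
  refine ⟨y, hy, ?_⟩
  rcases hy.1 with rfl | hvy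
  · exact absurd (Or.inr hvp.symm) hyp
  · exact hT.dist_eq_add_one_of_adj_of_ne hvy hvp hpd fun h => hyp (Or.inl h)

lemma exists_mem_sdiff_lt_dist_of_mem_privN (hT : T.IsTree) (hE : isDomSet T E) (hvE : v ∉ E)
    {y : V} (hy : y ∈ privN T D v) (hyd : T.dist y c = T.dist v c + 1) :
    ∃ w ∈ E \ D, T.dist v c < T.dist w c := by
  obtain ⟨w, hwE, hyw⟩ := hE y
  have hwv : w ≠ v := by rintro rfl; exact hvE hwE
  refine ⟨w, mem_sdiff.mpr ⟨hwE, fun hwD => hy.2 w hwD hwv hyw⟩, ?_⟩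
  have hvy : T.Adj v y := hy.1.resolve_left (by rintro rfl; omega)
  rcases hyw with rfl | hyw
  · omega
  · have := hT.dist_eq_add_one_of_adj_of_ne (c := c) hyw.symm hvy.symm (by omega) hwv
    omega

lemma IsHighestMinDomSet.exists_mem_sdiff_lt_dist (hT : T.IsTree) (hD : IsHighestMinDomSet T c D)
    (hE : isMinDomSet T E) (hvD : v ∈ D) (hvE : v ∉ E) :
    ∃ w ∈ E \ D, T.dist v c < T.dist w c := by
  by_cases hvc : v = c
  · subst hvc
    -- `E \ D` is nonempty because `E` and `D` have the same size, and the root is not in it.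
    obtain ⟨w, hw⟩ : (E \ D).Nonempty := by
      rw [sdiff_nonempty]
      intro hED
      have := eq_of_subset_of_card_le hED (hD.1.2 E hE.1)
      exact hvE (this ▸ hvD)
    have hwv : w ≠ v := fun h => (mem_sdiff.mp hw).2 (h ▸ hvD)
    exact ⟨w, hw, by simpa using hT.connected.pos_dist_of_ne hwv⟩
  · obtain ⟨y, hy, hyd⟩ := hD.exists_mem_privN_dist_eq_add_one hT hvD hvc
    exact exists_mem_sdiff_lt_dist_of_mem_privN hT hE.1 hvE hy hyd

lemma IsHighestMinDomSet.eq (hT : T.IsTree) (hD : IsHighestMinDomSet T c D)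
    (hE : IsHighestMinDomSet T c E) : D = E := by
  by_contra hDE
  obtain ⟨v, hv, hvmax⟩ := exists_max_image (symmDiff D E) (fun x => T.dist x c)
    (symmDiff_nonempty.mpr hDE)
  obtain ⟨w, hw, hvw⟩ : ∃ w ∈ symmDiff D E, T.dist v c < T.dist w c := by
    rcases mem_symmDiff.mp hv with ⟨hvD, hvE⟩ | ⟨hvE, hvD⟩
    · obtain ⟨w, hw, hvw⟩ := hD.exists_mem_sdiff_lt_dist hT hE.1 hvD hvE
      exact ⟨w, mem_symmDiff.mpr (Or.inr (mem_sdiff.mp hw)), hvw⟩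
    · obtain ⟨w, hw, hvw⟩ := hE.exists_mem_sdiff_lt_dist hT hD.1 hvE hvD
      exact ⟨w, mem_symmDiff.mpr (Or.inl (mem_sdiff.mp hw)), hvw⟩
  exact (hvmax w hw).not_gt hvw

end Domination

theorem stmt7 {V : Type} [Fintype V] [DecidableEq V] (T : SimpleGraph V) (hT : T.IsTree)
    (c : V) :
    ∃! D : Finset V, isMinDomSet T D ∧
      ∀ F : Finset V, isMinDomSet T F →
        ∑ x ∈ D, T.dist x c ≤ ∑ x ∈ F, T.dist x c := by
  obtain ⟨D, hD⟩ := exists_isHighestMinDomSet T c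
  exact ⟨D, hD, fun E hE => (hD.eq hT hE).symm⟩
end

section
/- For every tree T, the γ-graph T(γ) is connected. -/
/-!
Root the tree at `r`. Moving a vertex `x ≠ r` of a γ-set `D` to its parent keeps `D` dominating
unless `x` has a private child, and such a move is an edge of the γ-graph that lowers the total
depth of `D`. So every γ-set is joined to one in which every non-root vertex has a private child.
There is only one such γ-set: if `x` is a deepest vertex of `D ∆ D'`, say `x ∈ D`, then either
`x = r` and `D'` has a vertex outside `D` (both are minimum), or `x` has a private child `c`, and
the vertex of `D'` dominating `c` lies deeper in `D ∆ D'`.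
-/

open SimpleGraph Finset

namespace SimpleGraph

section RootedTree

variable {V : Type} {T : SimpleGraph V} {r x : V}

def IsChild (T : SimpleGraph V) (r x c : V) : Prop :=
  T.Adj x c ∧ T.dist r c = T.dist r x + 1

theorem IsTree.isChild_or_isChild (hT : T.IsTree) {y : V} (h : T.Adj x y) :
    T.IsChild r x y ∨ T.IsChild r y x := by
  rcases hT.dist_eq_dist_add_one_of_adj r h with h' | h'
  · exact .inr ⟨h.symm, h'⟩
  · exact .inl ⟨h, h'⟩

theorem IsTree.exists_isChild_of_ne (hT : T.IsTree) (hx : x ≠ r) : ∃ p, T.IsChild r p x := by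
  obtain ⟨w, hw⟩ := hT.connected.exists_walk_length_eq_dist x r
  cases w with
  | nil => exact absurd rfl hx
  | cons h q =>
    refine ⟨_, h.symm, ?_⟩
    have hq : T.dist r _ ≤ q.length := dist_comm (G := T) ▸ dist_le q
    rw [Walk.length_cons, dist_comm] at hw
    rcases hT.dist_eq_dist_add_one_of_adj r h with h' | h' <;> omega

theorem notMem_support_of_dist_lt {p : V} (q : T.Walk r p) (hq : q.length = T.dist r p)
    (hx : T.dist r p < T.dist r x) : x ∉ q.support := by
  classical
  intro hmem
  have := (dist_le (q.takeUntil x hmem)).trans (q.length_takeUntil_le_length hmem)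
  omega

theorem IsTree.eq_of_isChild (hT : T.IsTree) {p₁ p₂ : V} (h₁ : T.IsChild r p₁ x)
    (h₂ : T.IsChild r p₂ x) : p₁ = p₂ := by
  obtain ⟨q₁, hq₁, hl₁⟩ := hT.connected.exists_path_of_dist r p₁
  obtain ⟨q₂, hq₂, hl₂⟩ := hT.connected.exists_path_of_dist r p₂
  have hx₁ := notMem_support_of_dist_lt q₁ hl₁ (by rw [h₁.2]; omega)
  have hx₂ := notMem_support_of_dist_lt q₂ hl₂ (by rw [h₂.2]; omega)
  have hpath := hq₁.concat hx₁ h₁.1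
  have hp₂ :=
    hT.isAcyclic.mem_support_of_ne_mem_support_of_adj_of_isPath hpath hq₂ h₂.1.symm hx₂
  simpa using (hT.isAcyclic.eq_penultimate_of_adj_end hpath h₂.1.symm hp₂).symm

theorem sum_dist_insert_erase_lt [DecidableEq V] {D : Finset V} {p : V} (hx : x ∈ D)
    (hp : p ∉ D) (hpx : T.IsChild r p x) :
    ∑ y ∈ insert p (D.erase x), T.dist r y < ∑ y ∈ D, T.dist r y := by
  rw [sum_insert (fun h => hp (mem_of_mem_erase h)), ← add_sum_erase D _ hx, hpx.2]
  omega

end RootedTree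

section Domination

open scoped symmDiff

variable {V : Type} [Fintype V] [DecidableEq V] {T : SimpleGraph V} {D : Finset V} {r x p : V}

theorem exists_isMinDomSet (T : SimpleGraph V) : ∃ D, isMinDomSet T D := by
  have : Nonempty {D : Finset V // isDomSet T D} :=
    ⟨univ, fun v => ⟨v, mem_univ v, .inl rfl⟩⟩
  obtain ⟨⟨D, hD⟩, hmin⟩ :=
    Finite.exists_min fun D : {D : Finset V // isDomSet T D} => D.1.card
  exact ⟨D, hD, fun D' hD' => hmin ⟨D', hD'⟩⟩

theorem notMem_of_isDomSet_insert_erase (hD : isMinDomSet T D) (hx : x ∈ D) (hxp : x ≠ p)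
    (hdom : isDomSet T (insert p (D.erase x))) : p ∉ D := by
  intro hp
  rw [insert_eq_of_mem (mem_erase.2 ⟨hxp.symm, hp⟩)] at hdom
  have := hD.2 _ hdom
  rw [card_erase_of_mem hx] at this
  have := card_pos.2 ⟨x, hx⟩
  omega

theorem isMinDomSet_insert_erase (hD : isMinDomSet T D) (hx : x ∈ D) (hp : p ∉ D)
    (hdom : isDomSet T (insert p (D.erase x))) : isMinDomSet T (insert p (D.erase x)) := by
  have hcard : (insert p (D.erase x)).card = D.card := by
    rw [card_insert_of_notMem (fun h => hp (mem_of_mem_erase h)), card_erase_add_one hx]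
  exact ⟨hdom, hcard ▸ hD.2⟩

theorem gammaGraph_adj_insert_erase {D : {D : Finset V // isMinDomSet T D}} (hx : x ∈ D.1)
    (hxp : T.Adj x p) (hD' : isMinDomSet T (insert p (D.1.erase x))) :
    (gammaGraph T).Adj D ⟨_, hD'⟩ := by
  refine ⟨fun h => ?_, x, p, hxp, .inl ?_⟩
  · have hD : D.1 = insert p (D.1.erase x) := congrArg Subtype.val h
    rw [hD] at hx
    simp [hxp.ne] at hx
  · rw [sdiff_singleton_eq_erase, union_comm, ← insert_eq]

def HasPrivateChildren (T : SimpleGraph V) (r : V) (D : Finset V) : Prop :=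
  ∀ x ∈ D, x ≠ r → ∃ c ∈ privN T D x, T.IsChild r x c

theorem IsTree.isDomSet_insert_erase_of_isChild (hT : T.IsTree) (hD : isDomSet T D)
    (hx : x ∈ D) (hp : T.IsChild r p x) (hc : ¬∃ c ∈ privN T D x, T.IsChild r x c) :
    isDomSet T (insert p (D.erase x)) := by
  intro v
  obtain ⟨d, hd, hvd⟩ := hD v
  by_cases hdx : d = x
  swap
  · exact ⟨d, mem_insert_of_mem (mem_erase.2 ⟨hdx, hd⟩), hvd⟩
  subst hdx
  rcases hvd with rfl | hdv
  · exact ⟨p, mem_insert_self _ _, .inr hp.1⟩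
  by_cases hvp : v = p
  · exact ⟨p, mem_insert_self _ _, .inl hvp⟩
  have hchild : T.IsChild r d v :=
    (hT.isChild_or_isChild hdv).resolve_right fun h => hvp (hT.eq_of_isChild h hp)
  obtain ⟨z, hz, hzd, hvz⟩ : ∃ z ∈ D, z ≠ d ∧ v ∈ closedNbhd T z := by
    by_contra! h
    exact hc ⟨v, ⟨.inr hdv, h⟩, hchild⟩
  exact ⟨z, mem_insert_of_mem (mem_erase.2 ⟨hzd, hz⟩), hvz⟩

theorem IsTree.exists_reachable_hasPrivateChildren (hT : T.IsTree) (r : V)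
    (D : {D : Finset V // isMinDomSet T D}) :
    ∃ S, (gammaGraph T).Reachable D S ∧ T.HasPrivateChildren r S.1 := by
  induction hn : ∑ y ∈ D.1, T.dist r y using Nat.strong_induction_on generalizing D with
  | _ n ih =>
    by_cases hPC : T.HasPrivateChildren r D.1
    · exact ⟨D, .rfl, hPC⟩
    obtain ⟨x, hx, hxr, hc⟩ :
        ∃ x ∈ D.1, x ≠ r ∧ ¬∃ c ∈ privN T D.1 x, T.IsChild r x c := by
      simpa [HasPrivateChildren] using hPC
    obtain ⟨p, hp⟩ := hT.exists_isChild_of_ne hxr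
    have hdom := hT.isDomSet_insert_erase_of_isChild D.2.1 hx hp hc
    have hpD := notMem_of_isDomSet_insert_erase D.2 hx hp.1.ne.symm hdom
    have hD' := isMinDomSet_insert_erase D.2 hx hpD hdom
    obtain ⟨S, hS, hPC'⟩ := ih _ (hn ▸ sum_dist_insert_erase_lt hx hpD hp) ⟨_, hD'⟩ rfl
    exact ⟨S, (gammaGraph_adj_insert_erase hx hp.1.symm hD').reachable.trans hS, hPC'⟩

theorem IsTree.exists_dist_lt_of_hasPrivateChildren (hT : T.IsTree) {D' : Finset V}
    (hD : isMinDomSet T D) (hPC : T.HasPrivateChildren r D) (hD' : isDomSet T D')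
    (hx : x ∈ D) (hx' : x ∉ D') : ∃ y ∈ D ∆ D', T.dist r x < T.dist r y := by
  by_cases hxr : x = r
  · subst hxr
    have : ¬D' ⊆ D := fun hsub =>
      (hD.2 D' hD').not_gt (card_lt_card (hsub.ssubset_of_not_subset fun h => hx' (h hx)))
    obtain ⟨y, hyD', hyD⟩ := not_subset.1 this
    refine ⟨y, mem_symmDiff.2 (.inr ⟨hyD', hyD⟩), ?_⟩
    rw [dist_self]
    exact hT.connected.pos_dist_of_ne fun h => hyD (h ▸ hx)
  obtain ⟨c, ⟨-, hcpriv⟩, hc⟩ := hPC x hx hxr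
  obtain ⟨d, hd, hcd⟩ := hD' c
  have hdx : d ≠ x := fun h => hx' (h ▸ hd)
  have hdD : d ∉ D := fun hdD => hcpriv d hdD hdx hcd
  refine ⟨d, mem_symmDiff.2 (.inr ⟨hd, hdD⟩), ?_⟩
  rcases hcd with rfl | hdc
  · rw [hc.2]; omega
  rcases hT.isChild_or_isChild hdc with h | h
  · exact absurd (hT.eq_of_isChild h hc) hdx
  · rw [h.2, hc.2]; omega

theorem IsTree.eq_of_hasPrivateChildren (hT : T.IsTree) {D' : Finset V} (hD : isMinDomSet T D)
    (hD' : isMinDomSet T D') (hPC : T.HasPrivateChildren r D) (hPC' : T.HasPrivateChildren r D') :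
    D = D' := by
  by_contra hne
  obtain ⟨x, hx, hmax⟩ := exists_max_image (D ∆ D') (T.dist r ·) (symmDiff_nonempty.2 hne)
  obtain ⟨y, hy, hlt⟩ : ∃ y ∈ D ∆ D', T.dist r x < T.dist r y := by
    rcases mem_symmDiff.1 hx with ⟨hxD, hxD'⟩ | ⟨hxD', hxD⟩
    · exact hT.exists_dist_lt_of_hasPrivateChildren hD hPC hD'.1 hxD hxD'
    · simpa only [symmDiff_comm] using
        hT.exists_dist_lt_of_hasPrivateChildren hD' hPC' hD.1 hxD' hxD
  exact (hmax y hy).not_gt hlt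

end Domination

end SimpleGraph

theorem stmt8 {V : Type} [Fintype V] [DecidableEq V] (T : SimpleGraph V) (hT : T.IsTree) :
    (gammaGraph T).Connected := by
  obtain ⟨r⟩ := hT.connected.nonempty
  obtain ⟨D₀, hD₀⟩ := exists_isMinDomSet T
  have : Nonempty {D : Finset V // isMinDomSet T D} := ⟨⟨D₀, hD₀⟩⟩
  refine ⟨fun A B => ?_⟩
  obtain ⟨S, hAS, hS⟩ := hT.exists_reachable_hasPrivateChildren r A
  obtain ⟨S', hBS', hS'⟩ := hT.exists_reachable_hasPrivateChildren r B
  obtain rfl : S = S' := Subtype.ext (hT.eq_of_hasPrivateChildren S.2 S'.2 hS hS')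
  exact hAS.trans hBS'.symm
end

section
/- Let T be a tree with at least three vertices and let D be a minimum dominating set of T that has exactly one neighbour in the γ-graph T(γ). Then exactly one vertex v ∈ D has fewer than two D-external private neighbours, and moreover either v has exactly one D-external private neighbour, or v is a leaf of T with v ∈ pn(v, D). -/
open SimpleGraph Finset

/-! A neighbour of a γ-set `D` in `T(γ)` is exactly a set `D - u + w` obtained by a swap along an
edge `uw` with `u ∈ D`, `w ∉ D` and `pn(u, D) ⊆ N[w]`, and distinct swaps give distinct
neighbours. So if `D` is a leaf of `T(γ)` there is exactly one such swap `(u₀, w₀)`. In a tree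
(no triangles) every external private neighbour of `u₀` is adjacent to both `u₀` and `w₀`, hence
equals `w₀`; if there is none, then `pn(u₀, D) = {u₀}` and every neighbour of `u₀` is a valid
partner, so `u₀` is a leaf. Conversely, a vertex `v ∈ D` with at most one external private
neighbour admits a swap (with that neighbour, or with any neighbour of `v`), so `v = u₀`. -/

section SwapCard

variable {α : Type*} [DecidableEq α] {A : Finset α} {u v : α}

lemma card_swap_le (hu : u ∈ A) : (A \ {u} ∪ {v}).card ≤ A.card := by
  calc (A \ {u} ∪ {v}).card ≤ (A \ {u}).card + 1 := Finset.card_union_le _ _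
    _ = A.card := by
      rw [← Finset.erase_eq, Finset.card_erase_add_one hu]

lemma mem_and_notMem_of_card_swap_eq (hvu : v ≠ u) (hne : A \ {u} ∪ {v} ≠ A)
    (hcard : (A \ {u} ∪ {v}).card = A.card) : u ∈ A ∧ v ∉ A := by
  have huA : u ∈ A := by
    by_contra hu
    rw [← Finset.erase_eq, Finset.erase_eq_of_notMem hu] at hne hcard
    by_cases hv : v ∈ A
    · exact hne (Finset.union_eq_left.2 (Finset.singleton_subset_iff.2 hv))
    · rw [Finset.card_union_of_disjoint (by simpa using hv), Finset.card_singleton] at hcard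
      omega
  refine ⟨huA, fun hv => ?_⟩
  rw [Finset.union_eq_left.2 (Finset.singleton_subset_iff.2 (by simp [hv, hvu])),
    ← Finset.erase_eq] at hcard
  exact (Finset.card_erase_lt_of_mem huA).ne hcard

lemma swap_swap_eq_self (hu : u ∈ A) (hv : v ∉ A) : (A \ {u} ∪ {v}) \ {v} ∪ {u} = A := by
  ext x
  by_cases hx : x = u <;> by_cases hx' : x = v <;> simp_all

end SwapCard

variable {V : Type} [Fintype V] [DecidableEq V] {G : SimpleGraph V} {D : Finset V} {u v w : V}

lemma privN_nonempty (hD : isMinDomSet G D) (hv : v ∈ D) : (privN G D v).Nonempty := by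
  by_contra h
  have hdom : isDomSet G (D.erase v) := by
    intro x
    obtain ⟨d, hd, hxd⟩ := hD.1 x
    by_cases hdv : d = v
    · subst hdv
      have hx : ¬ ∀ z ∈ D, z ≠ d → x ∉ closedNbhd G z := fun hall => h ⟨x, hxd, hall⟩
      push Not at hx
      obtain ⟨z, hz, hzd, hxz⟩ := hx
      exact ⟨z, Finset.mem_erase.2 ⟨hzd, hz⟩, hxz⟩
    · exact ⟨d, Finset.mem_erase.2 ⟨hdv, hd⟩, hxd⟩
  exact (Finset.card_erase_lt_of_mem hv).not_ge (hD.2 _ hdom)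

lemma privN_eq_singleton_self (hD : isMinDomSet G D) (hv : v ∈ D)
    (h : (privN G D v \ {v}).ncard = 0) : privN G D v = {v} :=
  (privN_nonempty hD hv).subset_singleton_iff.1 (Set.sdiff_eq_empty.1 ((Set.ncard_eq_zero).1 h))

lemma isDomSet_swap (hD : isDomSet G D) (hsub : privN G D u ⊆ closedNbhd G w) :
    isDomSet G (D \ {u} ∪ {w}) := by
  intro x
  by_cases hx : ∃ z ∈ D, z ≠ u ∧ x ∈ closedNbhd G z
  · obtain ⟨z, hz, hzu, hxz⟩ := hx
    exact ⟨z, by simp [hz, hzu], hxz⟩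
  · push Not at hx
    obtain ⟨d, hd, hxd⟩ := hD x
    obtain rfl : d = u := by_contra fun hdu => hx d hd hdu hxd
    exact ⟨w, by simp, hsub ⟨hxd, hx⟩⟩

lemma privN_subset_of_isDomSet_swap (hdom : isDomSet G (D \ {u} ∪ {w})) :
    privN G D u ⊆ closedNbhd G w := by
  intro x hx
  obtain ⟨d, hd, hxd⟩ := hdom x
  rcases Finset.mem_union.1 hd with hd | hd
  · obtain ⟨hdD, hdu⟩ := Finset.mem_sdiff.1 hd
    exact absurd hxd (hx.2 d hdD (by simpa using hdu))
  · rwa [Finset.mem_singleton.1 hd] at hxd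

lemma isMinDomSet_swap (hD : isMinDomSet G D) (hu : u ∈ D)
    (hsub : privN G D u ⊆ closedNbhd G w) : isMinDomSet G (D \ {u} ∪ {w}) :=
  ⟨isDomSet_swap hD.1 hsub, fun _ hE => (card_swap_le hu).trans (hD.2 _ hE)⟩

structure IsSwap (G : SimpleGraph V) (D : Finset V) (u w : V) : Prop where
  mem : u ∈ D
  notMem : w ∉ D
  adj : G.Adj u w
  privN_subset : privN G D u ⊆ closedNbhd G w

lemma gammaGraph_adj_iff (hD : isMinDomSet G D) {E : {D : Finset V // isMinDomSet G D}} :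
    (gammaGraph G).Adj ⟨D, hD⟩ E ↔ ∃ u w, IsSwap G D u w ∧ E.1 = D \ {u} ∪ {w} := by
  have hcard : E.1.card = D.card := le_antisymm (E.2.2 _ hD.1) (hD.2 _ E.2.1)
  constructor
  · rintro ⟨hne, u, w, huw, hE | hE⟩ <;> dsimp only at hE
    · have hne' : D \ {u} ∪ {w} ≠ D := hE ▸ fun h => hne (Subtype.ext h).symm
      obtain ⟨hu, hw⟩ := mem_and_notMem_of_card_swap_eq huw.ne' hne' (hE ▸ hcard)
      exact ⟨u, w, ⟨hu, hw, huw, privN_subset_of_isDomSet_swap (hE ▸ E.2.1)⟩, hE⟩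
    · have hne' : E.1 \ {u} ∪ {w} ≠ E.1 := hE ▸ fun h => hne (Subtype.ext h)
      obtain ⟨hu, hw⟩ := mem_and_notMem_of_card_swap_eq huw.ne' hne' (hE ▸ hcard.symm)
      have hE' : E.1 = D \ {w} ∪ {u} := by rw [hE, swap_swap_eq_self hu hw]
      refine ⟨w, u, ⟨?_, ?_, huw.symm, privN_subset_of_isDomSet_swap (hE' ▸ E.2.1)⟩, hE'⟩ <;>
        simp [hE, huw.ne]
  · rintro ⟨u, w, ⟨hu, hw, huw, -⟩, hE⟩
    refine ⟨fun h => hw ?_, u, w, huw, Or.inl hE⟩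
    rw [show D = E.1 from congrArg Subtype.val h, hE]
    simp

lemma IsSwap.eq_of_swap_eq {u' w' : V} (h : IsSwap G D u w) (h' : IsSwap G D u' w')
    (heq : D \ {u} ∪ {w} = D \ {u'} ∪ {w'}) : u = u' ∧ w = w' := by
  obtain rfl : u = u' := by
    by_contra hne
    have hu : u ∈ D \ {u'} ∪ {w'} := by simp [h.mem, hne]
    rw [← heq] at hu
    simp [h.adj.ne] at hu
  have hw : w ∈ D \ {u} ∪ {w'} := heq ▸ by simp
  exact ⟨rfl, by simpa [h.notMem] using hw⟩

lemma exists_unique_isSwap (hD : isMinDomSet G D)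
    (hleaf : ((gammaGraph G).neighborSet ⟨D, hD⟩).ncard = 1) :
    ∃ u₀ w₀, IsSwap G D u₀ w₀ ∧ ∀ u w, IsSwap G D u w → u = u₀ ∧ w = w₀ := by
  obtain ⟨E₀, hE₀⟩ := Set.ncard_eq_one.1 hleaf
  have hadj : ∀ E, (gammaGraph G).Adj ⟨D, hD⟩ E ↔ E = E₀ := fun E => Set.ext_iff.1 hE₀ E
  obtain ⟨u₀, w₀, hsw₀, hE₀eq⟩ := (gammaGraph_adj_iff hD).1 ((hadj E₀).2 rfl)
  refine ⟨u₀, w₀, hsw₀, fun u w hsw => hsw.eq_of_swap_eq hsw₀ ?_⟩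
  have hE := (hadj ⟨_, isMinDomSet_swap hD hsw.mem hsw.privN_subset⟩).1
    ((gammaGraph_adj_iff hD).2 ⟨u, w, hsw, rfl⟩)
  rw [← hE₀eq, ← hE]

lemma IsSwap.privN_sdiff_subset (hG : G.CliqueFree 3) (h : IsSwap G D u w) :
    privN G D u \ {u} ⊆ {w} := by
  rintro y ⟨hy, hyu⟩
  have huy : G.Adj u y := hy.1.resolve_left hyu
  refine (h.privN_subset hy).resolve_right fun hwy => ?_
  exact hG {u, w, y} (is3Clique_triple_iff.2 ⟨h.adj, huy, hwy⟩)

lemma isSwap_of_privN_eq_singleton (hv : v ∈ D) (hpriv : privN G D v = {v})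
    (hvw : G.Adj v w) : IsSwap G D v w := by
  have hvp : v ∈ privN G D v := hpriv ▸ rfl
  refine ⟨hv, fun hw => hvp.2 w hw hvw.ne' (Or.inr hvw.symm), hvw, ?_⟩
  rw [hpriv, Set.singleton_subset_iff]
  exact Or.inr hvw.symm

lemma isSwap_of_privN_sdiff_eq_singleton (hv : v ∈ D) (hpriv : privN G D v \ {v} = {w}) :
    IsSwap G D v w := by
  obtain ⟨hwp, hwv⟩ : w ∈ privN G D v \ {v} := hpriv ▸ rfl
  have hvw : G.Adj v w := hwp.1.resolve_left hwv
  refine ⟨hv, fun hw => hwp.2 w hw hwv (Or.inl rfl), hvw, fun y hy => ?_⟩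
  by_cases hyv : y = v
  · exact Or.inr (hyv ▸ hvw.symm)
  · exact Or.inl (Set.eq_of_mem_singleton (hpriv ▸ ⟨hy, hyv⟩ : y ∈ ({w} : Set V)))

lemma exists_isSwap_of_ncard_lt_two (hD : isMinDomSet G D) (hv : v ∈ D)
    (hlt : (privN G D v \ {v}).ncard < 2) (hvx : ∃ x, G.Adj v x) : ∃ w, IsSwap G D v w := by
  rcases Nat.le_one_iff_eq_zero_or_eq_one.1 (Nat.lt_succ_iff.1 hlt) with h0 | h1
  · have hpriv := privN_eq_singleton_self hD hv h0
    obtain ⟨x, hvx⟩ := hvx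
    exact ⟨x, isSwap_of_privN_eq_singleton hv hpriv hvx⟩
  · obtain ⟨w, hw⟩ := Set.ncard_eq_one.1 h1
    exact ⟨w, isSwap_of_privN_sdiff_eq_singleton hv hw⟩

theorem stmt10_general {V : Type} [Fintype V] [DecidableEq V] (T : SimpleGraph V) (hT : T.IsTree)
    (D : Finset V) (hD : isMinDomSet T D)
    (hleaf : ((gammaGraph T).neighborSet ⟨D, hD⟩).ncard = 1) :
    ∃! v : V, v ∈ D ∧ (privN T D v \ {v}).ncard < 2 ∧
      ((privN T D v \ {v}).ncard = 1 ∨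
        ((T.neighborSet v).ncard = 1 ∧ v ∈ privN T D v)) := by
  obtain ⟨u₀, w₀, hsw₀, huniq⟩ := exists_unique_isSwap hD hleaf
  have hle : (privN T D u₀ \ {u₀}).ncard ≤ 1 := by
    simpa using Set.ncard_le_ncard (hsw₀.privN_sdiff_subset (hT.isAcyclic.cliqueFree le_rfl))
  refine ⟨u₀, ⟨hsw₀.mem, Nat.lt_succ_of_le hle, ?_⟩, ?_⟩
  · rcases Nat.le_one_iff_eq_zero_or_eq_one.1 hle with h0 | h1
    · have hpriv := privN_eq_singleton_self hD hsw₀.mem h0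
      have hnbhd : T.neighborSet u₀ = {w₀} := Set.eq_singleton_iff_unique_mem.2
        ⟨hsw₀.adj, fun x hx => (huniq u₀ x (isSwap_of_privN_eq_singleton hsw₀.mem hpriv hx)).2⟩
      exact Or.inr ⟨by rw [hnbhd, Set.ncard_singleton], hpriv ▸ rfl⟩
    · exact Or.inl h1
  · rintro v ⟨hv, hlt, -⟩
    by_contra hvu
    obtain ⟨p⟩ := hT.connected.preconnected v u₀
    obtain ⟨w, hsw⟩ := exists_isSwap_of_ncard_lt_two hD hv hlt ⟨_, p.adj_snd (p.not_nil_of_ne hvu)⟩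
    exact hvu (huniq v w hsw).1

theorem stmt10 {V : Type} [Fintype V] [DecidableEq V] (T : SimpleGraph V) (hT : T.IsTree)
    (hcard : 3 ≤ Fintype.card V)
    (D : Finset V) (hD : isMinDomSet T D)
    (hleaf : ((gammaGraph T).neighborSet ⟨D, hD⟩).ncard = 1) :
    ∃! v : V, v ∈ D ∧ (privN T D v \ {v}).ncard < 2 ∧
      ((privN T D v \ {v}).ncard = 1 ∨
        ((T.neighborSet v).ncard = 1 ∧ v ∈ privN T D v)) :=
  stmt10_general T hT D hD hleaf
end

section
/- Let G be a tree which is the γ-graph of some tree T, let L be a leaf of G with unique neighbour, and suppose x ∈ L is a vertex with at most one L-external private neighbour. Then L is the unique minimum dominating set of T containing x. -/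
open SimpleGraph Finset

/-!
Suppose `E ≠ L` is another γ-set containing `x`. Swapping `x` for its external private
neighbour (or for any neighbour, if it has none) yields a γ-graph neighbour of `L` avoiding `x`.
The same swap at some `u ∈ L \ E` with at most one external private neighbour would yield a
γ-graph neighbour containing `x`, impossible as `L` is a leaf. Hence every `u ∈ L \ E` has two
external private neighbours `w₁, w₂`, dominated by distinct `d₁, d₂ ∈ E \ L`. Since `T` is a
tree, contracting the paths `d₁ w₁ u w₂ d₂` gives a forest on `E \ L` with `|L \ E|` edges,
so `|L \ E| < |E \ L|`, contradicting `|L| = |E|`.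
-/

namespace SimpleGraph

lemma IsAcyclic.card_edgeFinset_lt {W : Type*} [Fintype W] [Nonempty W] {H : SimpleGraph W}
    [Fintype H.edgeSet] (hH : H.IsAcyclic) : #H.edgeFinset < Fintype.card W := by
  classical
  obtain ⟨F, hHF, -, hF⟩ := connected_top.exists_isTree_le_of_le_of_isAcyclic le_top hH
  calc #H.edgeFinset ≤ #F.edgeFinset := card_le_card (edgeFinset_mono hHF)
    _ < Fintype.card W := by have := hF.card_edgeFinset; omega

lemma Reachable.lift {α β : Type*} {G : SimpleGraph α} {H : SimpleGraph β} (f : α → β)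
    (h : ∀ a b, G.Adj a b → H.Reachable (f a) (f b)) {a b : α} (hab : G.Reachable a b) :
    H.Reachable (f a) (f b) := by
  rw [reachable_iff_reflTransGen] at hab
  induction hab with
  | refl => rfl
  | tail _ hbc ih => exact ih.trans (h _ _ hbc)

lemma card_lt_of_forall_not_reachable {ι W : Type*} [Fintype ι] [Fintype W] [Nonempty W]
    (f : ι → Sym2 W)
    (hf : ∀ i a b, f i = s(a, b) → ¬ (fromEdgeSet (f '' {i}ᶜ)).Reachable a b) :
    Fintype.card ι < Fintype.card W := by
  classical
  have hdiag : ∀ i, ¬ (f i).IsDiag := by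
    intro i
    cases h : f i with
    | h a b => rintro (rfl : a = b); exact hf i a a h (Reachable.refl a)
  have hinj : f.Injective := by
    intro i j hij
    by_contra hne
    cases h : f i with
    | h a b =>
      apply hf i a b h
      refine Adj.reachable ((fromEdgeSet_adj _).2 ⟨⟨j, Ne.symm hne, hij ▸ h⟩, ?_⟩)
      rintro rfl
      exact hdiag i (h ▸ Sym2.mk_isDiag_iff.2 rfl)
  set H := fromEdgeSet (Set.range f)
  have hedges : H.edgeFinset = univ.image f := by
    ext e
    simp only [H, mem_edgeFinset, edgeSet_fromEdgeSet, Set.mem_sdiff, Set.mem_range,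
      Sym2.mem_diagSet, mem_image, mem_univ, true_and]
    constructor
    · exact fun h => h.1
    · rintro ⟨i, rfl⟩; exact ⟨⟨i, rfl⟩, hdiag i⟩
  have hH : H.IsAcyclic := by
    rw [isAcyclic_iff_forall_isBridge]
    intro e he
    rw [edgeSet_fromEdgeSet] at he
    obtain ⟨⟨i, rfl⟩, -⟩ := he
    cases h : f i with
    | h a b =>
      rw [isBridge_iff]
      refine fun hr => hf i a b h (hr.mono ?_)
      rw [deleteEdges, ← fromEdgeSet_sdiff]
      refine fromEdgeSet_mono ?_
      rintro _ ⟨⟨j, rfl⟩, hj⟩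
      exact ⟨j, fun hji => hj (by rw [hji, h]; rfl), rfl⟩
  calc Fintype.card ι = #H.edgeFinset := by rw [hedges, card_image_of_injective _ hinj, card_univ]
    _ < Fintype.card W := hH.card_edgeFinset_lt

lemma adj_deleteEdges_of_ne {V : Type*} {G : SimpleGraph V} {a b c e : V} (h : G.Adj a b)
    (ha : c ≠ a) (hb : c ≠ b) : (G.deleteEdges {s(c, e)}).Adj a b := by
  refine (deleteEdges_adj ..).2 ⟨h, fun hab => ?_⟩
  have hc : c ∈ s(a, b) := by rw [Set.mem_singleton_iff.1 hab]; exact Sym2.mem_mk_left c e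
  rcases Sym2.mem_iff.1 hc with hc | hc
  exacts [ha hc, hb hc]

end SimpleGraph

section Domination

variable {V : Type} [Fintype V] [DecidableEq V] {T : SimpleGraph V} {L E : Finset V}
  {u v w : V}

lemma adj_and_notMem_of_mem_privN_sdiff (hw : w ∈ privN T L u \ {u}) : T.Adj u w ∧ w ∉ L :=
  ⟨hw.1.1.resolve_left hw.2, fun hwL => hw.1.2 w hwL hw.2 (Or.inl rfl)⟩

lemma exists_mem_sdiff_of_mem_privN (hE : isDomSet T E) (hw : w ∈ privN T L u) (hu : u ∉ E) :
    ∃ d ∈ E \ L, w ∈ closedNbhd T d := by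
  obtain ⟨d, hd, hwd⟩ := hE w
  have hdu : d ≠ u := fun h => hu (h ▸ hd)
  exact ⟨d, mem_sdiff.2 ⟨hd, fun hdL => hw.2 d hdL hdu hwd⟩, hwd⟩

lemma exists_adj_privN_subset_pair (hT : T.Preconnected) [Nontrivial V]
    (hpn : (privN T L u \ {u}).Subsingleton) : ∃ v, T.Adj u v ∧ privN T L u ⊆ {u, v} := by
  by_cases hext : ∃ w, w ∈ privN T L u \ {u}
  · obtain ⟨w, hw⟩ := hext
    refine ⟨w, (adj_and_notMem_of_mem_privN_sdiff hw).1, fun y hy => ?_⟩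
    by_cases hyu : y = u
    · exact Or.inl hyu
    · exact Or.inr (hpn ⟨hy, hyu⟩ hw)
  · push Not at hext
    obtain ⟨v, huv⟩ := hT.exists_adj_of_nontrivial u
    exact ⟨v, huv, fun y hy => Or.inl (by_contra fun hyu => hext y ⟨hy, hyu⟩)⟩

lemma isDomSet_swap_s13 (hL : isDomSet T L) (huv : T.Adj u v) (hpn : privN T L u ⊆ {u, v}) :
    isDomSet T (L \ {u} ∪ {v}) := by
  intro t
  obtain ⟨d, hd, htd⟩ := hL t
  by_cases hdu : d = u
  · subst hdu
    by_cases htp : t ∈ privN T L d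
    · refine ⟨v, by simp, ?_⟩
      rcases hpn htp with rfl | rfl
      exacts [Or.inr huv.symm, Or.inl rfl]
    · obtain ⟨z, hz, hzd, htz⟩ : ∃ z ∈ L, z ≠ d ∧ t ∈ closedNbhd T z := by
        by_contra! h
        exact htp ⟨htd, h⟩
      exact ⟨z, by simp [hz, hzd], htz⟩
  · exact ⟨d, by simp [hd, hdu], htd⟩

lemma exists_gammaGraph_adj_notMem (hT : T.Preconnected) [Nontrivial V]
    (hL : isMinDomSet T L) (hu : u ∈ L) (hpn : (privN T L u \ {u}).Subsingleton) :
    ∃ (M : Finset V) (hM : isMinDomSet T M),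
      (gammaGraph T).Adj ⟨L, hL⟩ ⟨M, hM⟩ ∧ u ∉ M ∧ L.erase u ⊆ M := by
  obtain ⟨v, huv, hsub⟩ := exists_adj_privN_subset_pair hT hpn
  have huM : u ∉ L \ {u} ∪ {v} := by simp [huv.ne]
  have hcard : #(L \ {u} ∪ {v}) ≤ #L := by
    calc #(L \ {u} ∪ {v}) ≤ #(L \ {u}) + 1 := card_union_le _ _
      _ = #L := by rw [← erase_eq, card_erase_add_one hu]
  have hM : isMinDomSet T (L \ {u} ∪ {v}) :=
    ⟨isDomSet_swap_s13 hL.1 huv hsub, fun D hD => hcard.trans (hL.2 D hD)⟩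
  refine ⟨_, hM, ⟨fun h => huM (Subtype.mk.inj h ▸ hu), u, v, huv, Or.inl rfl⟩, huM, ?_⟩
  rw [erase_eq]
  exact subset_union_left

end Domination

lemma reachable_deleteEdges_of_mem_closedNbhd {V : Type} {G : SimpleGraph V} {c d w e : V}
    (h : w ∈ closedNbhd G d) (hd : c ≠ d) (hw : c ≠ w) :
    (G.deleteEdges {s(c, e)}).Reachable d w := by
  rcases h with rfl | h
  exacts [Reachable.refl _, (adj_deleteEdges_of_ne h hd hw).reachable]

section PrivateNeighbourPaths

variable {V : Type} [Fintype V] [DecidableEq V] {T : SimpleGraph V} {L E : Finset V}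
  {u u₀ w w₁ w₂ d d₁ d₂ : V}

lemma reachable_deleteEdges_of_mem_privN (hu₀ : u₀ ∈ L) (hu : u ≠ u₀)
    (hw : w ∈ privN T L u \ {u}) (hd : d ∉ L) (hwd : w ∈ closedNbhd T d) (e : V) :
    (T.deleteEdges {s(u₀, e)}).Reachable u d := by
  obtain ⟨huw, hwL⟩ := adj_and_notMem_of_mem_privN_sdiff hw
  have hw₀ : u₀ ≠ w := fun h => hwL (h ▸ hu₀)
  exact (adj_deleteEdges_of_ne huw hu.symm hw₀).reachable.trans
    (reachable_deleteEdges_of_mem_closedNbhd hwd (fun h => hd (h ▸ hu₀)) hw₀).symm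

lemma not_reachable_deleteEdges_of_mem_privN (hT : T.IsAcyclic) (hu : u ∈ L)
    (hw₁ : w₁ ∈ privN T L u \ {u}) (hw₂ : w₂ ∈ privN T L u \ {u}) (hne : w₁ ≠ w₂)
    (hd₁ : d₁ ∉ L) (hd₂ : d₂ ∉ L) (h₁ : w₁ ∈ closedNbhd T d₁) (h₂ : w₂ ∈ closedNbhd T d₂) :
    ¬ (T.deleteEdges {s(u, w₁)}).Reachable d₁ d₂ := by
  intro hr
  have huw₁ := (adj_and_notMem_of_mem_privN_sdiff hw₁).1
  have huw₂ := (adj_and_notMem_of_mem_privN_sdiff hw₂).1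
  have hbridge : ¬ (T.deleteEdges {s(u, w₁)}).Reachable u w₁ :=
    isAcyclic_iff_forall_adj_isBridge.1 hT huw₁
  have huw₂' : (T.deleteEdges {s(u, w₁)}).Adj u w₂ := by
    rw [deleteEdges_adj, Set.mem_singleton_iff, Sym2.congr_right]
    exact ⟨huw₂, hne.symm⟩
  have hud₂ : (T.deleteEdges {s(u, w₁)}).Reachable u d₂ := huw₂'.reachable.trans
    (reachable_deleteEdges_of_mem_closedNbhd h₂ (fun h => hd₂ (h ▸ hu)) huw₂.ne).symm
  have hd₁w₁ : (T.deleteEdges {s(u, w₁)}).Reachable d₁ w₁ :=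
    reachable_deleteEdges_of_mem_closedNbhd h₁ (fun h => hd₁ (h ▸ hu)) huw₁.ne
  exact hbridge ((hud₂.trans hr.symm).trans hd₁w₁)

lemma card_sdiff_lt_card_sdiff_of_nontrivial_privN (hT : T.IsAcyclic) (hE : isDomSet T E) (hA : (L \ E).Nonempty)
    (hpn : ∀ u ∈ L \ E, (privN T L u \ {u}).Nontrivial) : #(L \ E) < #(E \ L) := by
  have hdata : ∀ u : ↥(L \ E), ∃ (d₁ d₂ : ↥(E \ L)) (w₁ w₂ : V),
      w₁ ∈ privN T L u \ {(u : V)} ∧ w₂ ∈ privN T L u \ {(u : V)} ∧ w₁ ≠ w₂ ∧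
      w₁ ∈ closedNbhd T d₁ ∧ w₂ ∈ closedNbhd T d₂ := by
    rintro ⟨u, hu⟩
    obtain ⟨w₁, hw₁, w₂, hw₂, hne⟩ := hpn u hu
    obtain ⟨d₁, hd₁, h₁⟩ := exists_mem_sdiff_of_mem_privN hE hw₁.1 (mem_sdiff.1 hu).2
    obtain ⟨d₂, hd₂, h₂⟩ := exists_mem_sdiff_of_mem_privN hE hw₂.1 (mem_sdiff.1 hu).2
    exact ⟨⟨d₁, hd₁⟩, ⟨d₂, hd₂⟩, w₁, w₂, hw₁, hw₂, hne, h₁, h₂⟩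
  choose d₁ d₂ w₁ w₂ hw₁ hw₂ hne h₁ h₂ using hdata
  have hL : ∀ u : ↥(L \ E), u.1 ∈ L := fun u => (mem_sdiff.1 u.2).1
  have hd₁ : ∀ u, (d₁ u).1 ∉ L := fun u => (mem_sdiff.1 (d₁ u).2).2
  have hd₂ : ∀ u, (d₂ u).1 ∉ L := fun u => (mem_sdiff.1 (d₂ u).2).2
  have : Nonempty ↥(E \ L) := ⟨d₁ ⟨_, hA.choose_spec⟩⟩
  suffices Fintype.card ↥(L \ E) < Fintype.card ↥(E \ L) by
    simpa only [Fintype.card_coe] using this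
  refine card_lt_of_forall_not_reachable (fun u => s(d₁ u, d₂ u)) fun u₀ a b hab hr => ?_
  set G := T.deleteEdges {s(u₀.1, w₁ u₀)}
  have hsep : ∀ u ≠ u₀, G.Reachable (d₁ u) (d₂ u) := fun u hu =>
    (reachable_deleteEdges_of_mem_privN (hL u₀) (Subtype.coe_ne_coe.2 hu) (hw₁ u) (hd₁ u)
      (h₁ u) _).symm.trans
    (reachable_deleteEdges_of_mem_privN (hL u₀) (Subtype.coe_ne_coe.2 hu) (hw₂ u) (hd₂ u)
      (h₂ u) _)
  have hrab : G.Reachable a b := hr.lift Subtype.val fun a' b' hab' => by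
    obtain ⟨⟨u, hu, hue⟩, -⟩ := (fromEdgeSet_adj _).1 hab'
    rcases Sym2.eq_iff.1 hue with ⟨rfl, rfl⟩ | ⟨rfl, rfl⟩
    exacts [hsep u hu, (hsep u hu).symm]
  refine not_reachable_deleteEdges_of_mem_privN hT (hL u₀) (hw₁ u₀) (hw₂ u₀) (hne u₀)
    (hd₁ u₀) (hd₂ u₀) (h₁ u₀) (h₂ u₀) ?_
  rcases Sym2.eq_iff.1 hab with ⟨rfl, rfl⟩ | ⟨rfl, rfl⟩
  exacts [hrab, hrab.symm]

end PrivateNeighbourPaths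

theorem stmt13_general {V : Type} [Fintype V] [DecidableEq V] (T : SimpleGraph V) (hT : T.IsTree)
    (L : Finset V) (hL : isMinDomSet T L)
    (hleaf : ((gammaGraph T).neighborSet ⟨L, hL⟩).ncard = 1)
    (x : V) (hx : x ∈ L) (hpn : (privN T L x \ {x}).ncard ≤ 1) :
    ∀ E : Finset V, isMinDomSet T E → x ∈ E → E = L := by
  intro E hE hxE
  by_contra hEL
  have hcard : #L = #E := le_antisymm (hL.2 E hE.1) (hE.2 L hL.1)
  have hA : (L \ E).Nonempty :=
    sdiff_nonempty.2 fun hLE => hEL (eq_of_subset_of_card_le hLE hcard.ge).symm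
  have hxA : ∀ u ∈ L \ E, x ≠ u := fun u hu h => (mem_sdiff.1 hu).2 (h ▸ hxE)
  have : Nontrivial V := nontrivial_of_ne x _ (hxA _ hA.choose_spec)
  have hconn := hT.connected.preconnected
  obtain ⟨N, hN, hLN, hxN, -⟩ :=
    exists_gammaGraph_adj_notMem hconn hL hx (Set.ncard_le_one_iff_subsingleton.1 hpn)
  by_cases hsub : ∃ u ∈ L \ E, (privN T L u \ {u}).Subsingleton
  · obtain ⟨u, hu, hpnu⟩ := hsub
    obtain ⟨M, hM, hLM, -, hLM'⟩ :=
      exists_gammaGraph_adj_notMem hconn hL (mem_sdiff.1 hu).1 hpnu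
    have hNM : (⟨N, hN⟩ : {D // isMinDomSet T D}) = ⟨M, hM⟩ :=
      (Set.ncard_le_one (Set.toFinite _)).1 hleaf.le _ hLN _ hLM
    exact hxN (Subtype.mk.inj hNM ▸ hLM' (mem_erase.2 ⟨hxA u hu, hx⟩))
  · push Not at hsub
    have := card_sdiff_lt_card_sdiff_of_nontrivial_privN hT.isAcyclic hE.1 hA hsub
    rw [card_sdiff_comm hcard] at this
    exact this.false

theorem stmt13 {V : Type} [Fintype V] [DecidableEq V] (T : SimpleGraph V) (hT : T.IsTree)
    (hGtree : (gammaGraph T).IsTree)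
    (L : Finset V) (hL : isMinDomSet T L)
    (hleaf : ((gammaGraph T).neighborSet ⟨L, hL⟩).ncard = 1)
    (x : V) (hx : x ∈ L) (hpn : (privN T L x \ {x}).ncard ≤ 1) :
    ∀ E : Finset V, isMinDomSet T E → x ∈ E → E = L :=
  stmt13_general T hT L hL hleaf x hx hpn
end

section
/- Let T be a tree and let W, X, Y, Z be γ-sets of T forming a 4-cycle in T(γ) (W~X~Y~Z~W). Then there exist distinct vertices a, b ∈ W and distinct vertices c, d ∉ W with a adjacent to c and b adjacent to d in T, such that X = (W \ {a}) ∪ {c}, Z = (W \ {b}) ∪ {d}, and Y = (W \ {a, b}) ∪ {c, d}. -/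
open SimpleGraph Finset

/-!
Every edge of a γ-graph exchanges a vertex `u ∈ D` for a neighbour `v ∉ D`, since γ-sets all have the
same size. Two consecutive exchanges `W → X → Y` either swap two distinct vertices of `W` for two
outside vertices, or, if the second exchange undoes part of the first, swap one vertex `w` for one
vertex `y` via a path `w x y`. Both routes `W → X → Y` and `W → Z → Y` see the same differences
`W \ Y` and `Y \ W`, so they are of the same kind. Two distinct detours `w x y`, `w x' y` would
form a 4-cycle in `T`; two distinct double swaps of `{a, p}` for `{c, q}` either use the other
exchange first, which is the claim, or use the other matching `a q`, `p c`, again a 4-cycle.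
-/

theorem SimpleGraph.IsAcyclic.eq_of_square {V : Type} {G : SimpleGraph V} (hG : G.IsAcyclic)
    {a b c d : V} (hab : G.Adj a b) (hbc : G.Adj b c) (hcd : G.Adj c d) (hda : G.Adj d a)
    (hac : a ≠ c) : b = d := by
  have := (hG.subsingleton_path a c).elim
    ⟨.cons hab (.cons hbc .nil), by simp [hab.ne, hbc.ne, hac]⟩
    ⟨.cons hda.symm (.cons hcd.symm .nil), by simp [hda.ne', hcd.ne', hac]⟩
  simpa using congrArg (fun p : G.Path a c => p.1.support) this

theorem Finset.pair_eq_pair_iff {α : Type} [DecidableEq α] {x y z w : α} :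
    ({x, y} : Finset α) = {z, w} ↔ x = z ∧ y = w ∨ x = w ∧ y = z := by
  rw [← coe_inj]
  push_cast
  exact Set.pair_eq_pair_iff

section Swap

variable {V : Type} [DecidableEq V]

theorem sdiff_union_inj {s A A' C C' : Finset V} (hA : A ⊆ s) (hA' : A' ⊆ s)
    (hC : Disjoint C s) (hC' : Disjoint C' s) (h : s \ A ∪ C = s \ A' ∪ C') :
    A = A' ∧ C = C' := by
  have hmem x := congrArg (x ∈ ·) h
  simp only [mem_union, mem_sdiff, eq_iff_iff] at hmem
  constructor <;> ext x <;> grind [Finset.disjoint_left]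

theorem mem_and_notMem_of_card_eq {s t : Finset V} {u v : V} (hcard : #s = #t)
    (hne : s ≠ t) (h : t = s \ {u} ∪ {v}) : u ∈ s ∧ v ∉ s := by
  refine ⟨by_contra fun hu => hne ?_, fun hv => hne ?_⟩
  · refine eq_of_subset_of_card_le (fun x hx => ?_) hcard.ge
    rw [h]
    exact mem_union_left _ (mem_sdiff.mpr ⟨hx, fun hxu => hu (mem_singleton.mp hxu ▸ hx)⟩)
  · refine (eq_of_subset_of_card_le ?_ hcard.le).symm
    rw [h]
    exact union_subset sdiff_subset (singleton_subset_iff.mpr hv)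

theorem sdiff_union_sdiff_union_cancel {s : Finset V} {u v : V} (hu : u ∈ s) (hv : v ∉ s) :
    (s \ {u} ∪ {v}) \ {v} ∪ {u} = s := by
  ext x
  by_cases x = u <;> by_cases x = v <;> simp_all

variable (G : SimpleGraph V)

def IsSwap_s19 (s t : Finset V) : Prop :=
  ∃ u ∈ s, ∃ v ∉ s, G.Adj u v ∧ t = s \ {u} ∪ {v}

def IsDoubleSwap (s t r : Finset V) : Prop :=
  ∃ a p c q, a ∈ s ∧ p ∈ s ∧ a ≠ p ∧ c ∉ s ∧ q ∉ s ∧ c ≠ q ∧ G.Adj a c ∧ G.Adj p q ∧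
    t = s \ {a} ∪ {c} ∧ r = s \ {a, p} ∪ {c, q}

-- `r` trades `w` for `y`, and `t` is the halfway point of moving along the path `w x y`.
def IsDetourSwap (s t r : Finset V) : Prop :=
  ∃ w ∈ s, ∃ y ∉ s, ∃ x, G.Adj w x ∧ G.Adj x y ∧ r = s \ {w} ∪ {y} ∧
    (x ∉ s ∧ t = s \ {w} ∪ {x} ∨ x ∈ s ∧ t = s \ {x} ∪ {y})

variable {G}

theorem IsSwap_s19.isDoubleSwap_or_isDetourSwap {s t r : Finset V} (hst : IsSwap_s19 G s t)
    (htr : IsSwap_s19 G t r) (hrs : r ≠ s) : IsDoubleSwap G s t r ∨ IsDetourSwap G s t r := by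
  obtain ⟨a, ha, c, hc, hac, rfl⟩ := hst
  obtain ⟨p, hp, q, hq, hpq, rfl⟩ := htr
  simp only [mem_union, mem_sdiff, mem_singleton, not_or, not_and_or, not_not] at hp hq
  obtain ⟨hq, hqc⟩ := hq
  rcases hp with ⟨hp, hpa⟩ | rfl
  · obtain hq | rfl := hq
    · left
      refine ⟨a, p, c, q, ha, hp, Ne.symm hpa, hc, hq, Ne.symm hqc, hac, hpq, rfl, ?_⟩
      ext x
      by_cases x = a <;> by_cases x = c <;> by_cases x = p <;> by_cases x = q <;> simp_all
    · right
      refine ⟨p, hp, c, hc, q, hpq, hac, ?_, Or.inr ⟨ha, rfl⟩⟩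
      ext x
      by_cases x = q <;> by_cases x = c <;> by_cases x = p <;> simp_all
  · have hqa : q ≠ a := by
      rintro rfl
      exact hrs (sdiff_union_sdiff_union_cancel ha hc)
    right
    refine ⟨a, ha, q, hq.resolve_right hqa, p, hac, hpq, ?_, Or.inl ⟨hc, rfl⟩⟩
    ext x
    by_cases x = q <;> by_cases x = a <;> by_cases x = p <;> simp_all

theorem IsDoubleSwap.not_isDetourSwap {s t t' r : Finset V} (h : IsDoubleSwap G s t r)
    (h' : IsDetourSwap G s t' r) : False := by
  obtain ⟨a, p, c, q, ha, hp, hap, hc, hq, -, -, -, -, rfl⟩ := h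
  obtain ⟨w, hw, y, hy, -, -, -, hr, -⟩ := h'
  have hA := (sdiff_union_inj (insert_subset ha (singleton_subset_iff.mpr hp))
    (singleton_subset_iff.mpr hw) (by simp [hc, hq]) (by simpa) hr).1
  exact hap ((mem_singleton.mp (hA ▸ mem_insert_self a {p})).trans
    (mem_singleton.mp (hA ▸ mem_insert_of_mem (mem_singleton_self p))).symm)

theorem IsDetourSwap.eq_of_isDetourSwap {s t t' r : Finset V} (hG : G.IsAcyclic)
    (h : IsDetourSwap G s t r) (h' : IsDetourSwap G s t' r) : t = t' := by
  obtain ⟨w, hw, y, hy, x, hwx, hxy, rfl, ht⟩ := h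
  obtain ⟨w', hw', y', hy', x', hwx', hxy', hr, ht'⟩ := h'
  obtain ⟨hww', hyy'⟩ := sdiff_union_inj (singleton_subset_iff.mpr hw)
    (singleton_subset_iff.mpr hw') (by simpa) (by simpa) hr
  obtain rfl := singleton_inj.mp hww'
  obtain rfl := singleton_inj.mp hyy'
  obtain rfl := hG.eq_of_square hwx hxy hxy'.symm hwx'.symm (by rintro rfl; exact hy hw)
  grind

theorem IsDoubleSwap.exists_of_isDoubleSwap {s t t' r : Finset V} (hG : G.IsAcyclic)
    (h : IsDoubleSwap G s t r) (h' : IsDoubleSwap G s t' r) (htt' : t ≠ t') :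
    ∃ a b c d, a ∈ s ∧ b ∈ s ∧ a ≠ b ∧ c ∉ s ∧ d ∉ s ∧ c ≠ d ∧ G.Adj a c ∧ G.Adj b d ∧
      t = s \ {a} ∪ {c} ∧ t' = s \ {b} ∪ {d} ∧ r = s \ {a, b} ∪ {c, d} := by
  obtain ⟨a, p, c, q, ha, hp, hap, hc, hq, hcq, hac, hpq, rfl, rfl⟩ := h
  obtain ⟨b, p', d, q', hb, hp', -, hd, hq', -, hbd, hpq', rfl, hr⟩ := h'
  obtain ⟨hA, hC⟩ := sdiff_union_inj (insert_subset ha (singleton_subset_iff.mpr hp))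
    (insert_subset hb (singleton_subset_iff.mpr hp')) (by simp [hc, hq]) (by simp [hd, hq']) hr
  rcases pair_eq_pair_iff.mp hA with ⟨rfl, rfl⟩ | ⟨rfl, rfl⟩ <;>
    rcases pair_eq_pair_iff.mp hC with ⟨rfl, rfl⟩ | ⟨rfl, rfl⟩
  · exact absurd rfl htt'
  · exact absurd (hG.eq_of_square hac hpq'.symm hpq hbd.symm hap) hcq
  · exact absurd (hG.eq_of_square hac hbd.symm hpq hpq'.symm hap) hcq
  · exact ⟨_, _, _, _, ha, hb, hap, hc, hd, hcq, hac, hbd, rfl, rfl, rfl⟩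

end Swap

theorem gammaGraph_adj_isSwap {V : Type} [Fintype V] [DecidableEq V] {G : SimpleGraph V}
    {D₁ D₂ : {D : Finset V // isMinDomSet G D}} (h : (gammaGraph G).Adj D₁ D₂) :
    IsSwap_s19 G D₁.1 D₂.1 := by
  have hcard : #D₁.1 = #D₂.1 := le_antisymm (D₁.2.2 _ D₂.2.1) (D₂.2.2 _ D₁.2.1)
  obtain ⟨hne, u, v, huv, h | h⟩ := h
  · obtain ⟨hu, hv⟩ := mem_and_notMem_of_card_eq hcard (Subtype.coe_ne_coe.mpr hne) h
    exact ⟨u, hu, v, hv, huv, h⟩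
  · obtain ⟨hu, hv⟩ := mem_and_notMem_of_card_eq hcard.symm (Subtype.coe_ne_coe.mpr hne.symm) h
    refine ⟨v, by simp [h], u, by simp [h, huv.ne], huv.symm, ?_⟩
    rw [h, sdiff_union_sdiff_union_cancel hu hv]

theorem stmt19 {V : Type} [Fintype V] [DecidableEq V] (T : SimpleGraph V) (hT : T.IsTree)
    (W X Y Z : {D : Finset V // isMinDomSet T D})
    (hWX : (gammaGraph T).Adj W X) (hXY : (gammaGraph T).Adj X Y)
    (hYZ : (gammaGraph T).Adj Y Z) (hZW : (gammaGraph T).Adj Z W)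
    (hWY : W ≠ Y) (hXZ : X ≠ Z) :
    ∃ a b c d : V, a ∈ W.1 ∧ b ∈ W.1 ∧ a ≠ b ∧ c ∉ W.1 ∧ d ∉ W.1 ∧ c ≠ d ∧
      T.Adj a c ∧ T.Adj b d ∧
      X.1 = (W.1 \ {a}) ∪ {c} ∧ Z.1 = (W.1 \ {b}) ∪ {d} ∧
      Y.1 = (W.1 \ {a, b}) ∪ {c, d} := by
  have hYW : Y.1 ≠ W.1 := Subtype.coe_ne_coe.mpr hWY.symm
  have hXZ : X.1 ≠ Z.1 := Subtype.coe_ne_coe.mpr hXZ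
  have viaX := (gammaGraph_adj_isSwap hWX).isDoubleSwap_or_isDetourSwap
    (gammaGraph_adj_isSwap hXY) hYW
  have viaZ := (gammaGraph_adj_isSwap hZW.symm).isDoubleSwap_or_isDetourSwap
    (gammaGraph_adj_isSwap hYZ.symm) hYW
  rcases viaX with hX | hX <;> rcases viaZ with hZ | hZ
  · exact hX.exists_of_isDoubleSwap hT.isAcyclic hZ hXZ
  · exact (hX.not_isDetourSwap hZ).elim
  · exact (hZ.not_isDetourSwap hX).elim
  · exact (hXZ (hX.eq_of_isDetourSwap hT.isAcyclic hZ)).elim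
end
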